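/- arXiv:1508.07762 — 2 statements merged into one kernel-verified Lean document; each statement's English description precedes it below -/
import Mathlib

section
/- For each g = (a,v,t) ∈ G, the map s_g(a',v',t') = (2a−a', 2v cosh(a−a') − v', 2t cosh(2a−2a') − t' + ω₀(v,v') sinh(a−a')) is an involution: s_g(s_g(g')) = g' for all g' ∈ G. -/
open Real
noncomputable section

abbrev G (d : ℕ) := ℝ × ((Fin d → ℝ) × (Fin d → ℝ)) × ℝ

/-- The standard symplectic form on ℝ^{2d}, with v = (n, m). -/
def omega0 {d : ℕ} (v w : (Fin d → ℝ) × (Fin d → ℝ)) : ℝ :=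
  ∑ i, (v.1 i * w.2 i - v.2 i * w.1 i)

/-- The group law (a,v,t)(a',v',t') = (a+a', e^{-a'}v+v', e^{-2a'}t+t'+(1/2)e^{-a'}ω₀(v,v')). -/
def gmul {d : ℕ} (g h : G d) : G d :=
  (g.1 + h.1, Real.exp (-h.1) • g.2.1 + h.2.1,
    Real.exp (-(2 * h.1)) * g.2.2 + h.2.2 + (1/2) * Real.exp (-h.1) * omega0 g.2.1 h.2.1)

/-- The identity element (0,0,0). -/
def gone {d : ℕ} : G d := (0, 0, 0)

/-- The inverse (a,v,t)^{-1} = (-a, -e^a v, -e^{2a} t). -/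
def ginv {d : ℕ} (g : G d) : G d :=
  (-g.1, -(Real.exp g.1 • g.2.1), -(Real.exp (2 * g.1) * g.2.2))

/-- The symmetry s_g at the point g. -/
def ssym {d : ℕ} (g g' : G d) : G d :=
  (2 * g.1 - g'.1, (2 * Real.cosh (g.1 - g'.1)) • g.2.1 - g'.2.1,
    2 * g.2.2 * Real.cosh (2 * g.1 - 2 * g'.1) - g'.2.2
      + omega0 g.2.1 g'.2.1 * Real.sinh (g.1 - g'.1))

/-- The two-point phase S(g₁,g₂). -/
def Sph {d : ℕ} (g₁ g₂ : G d) : ℝ :=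
  Real.sinh (2 * g₁.1) * g₂.2.2 - Real.sinh (2 * g₂.1) * g₁.2.2
    + Real.cosh g₁.1 * Real.cosh g₂.1 * omega0 g₁.2.1 g₂.2.1

/-- The two-point amplitude A(g₁,g₂). -/
def Aamp {d : ℕ} (g₁ g₂ : G d) : ℝ :=
  (Real.cosh g₁.1 * Real.cosh g₂.1 * Real.cosh (g₁.1 - g₂.1)) ^ d *
    Real.sqrt (Real.cosh (2 * g₁.1) * Real.cosh (2 * g₂.1) * Real.cosh (2 * g₁.1 - 2 * g₂.1))

/-- The two-point kernel K_θ(g₁,g₂) = (4/(πθ)^{2d+2}) A(g₁,g₂) exp((2i/θ) S(g₁,g₂)). -/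
def Kker {d : ℕ} (θ : ℝ) (g₁ g₂ : G d) : ℂ :=
  (4 / (Real.pi * θ) ^ (2 * d + 2) : ℝ) * (Aamp g₁ g₂ : ℝ) *
    Complex.exp ((2 * Complex.I / (θ : ℂ)) * (Sph g₁ g₂ : ℝ))

lemma omega0_sub_right {d : ℕ} (v w w' : (Fin d → ℝ) × (Fin d → ℝ)) :
    omega0 v (w - w') = omega0 v w - omega0 v w' := by
  simp only [omega0, Prod.fst_sub, Prod.snd_sub, Pi.sub_apply, ← Finset.sum_sub_distrib]
  congr 1; funext i; ring

lemma omega0_smul_right {d : ℕ} (c : ℝ) (v w : (Fin d → ℝ) × (Fin d → ℝ)) :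
    omega0 v (c • w) = c * omega0 v w := by
  simp only [omega0, Prod.smul_fst, Prod.smul_snd, Pi.smul_apply, smul_eq_mul,
    Finset.mul_sum]
  congr 1; funext i; ring

lemma omega0_self {d : ℕ} (v : (Fin d → ℝ) × (Fin d → ℝ)) : omega0 v v = 0 := by
  simp [omega0, mul_comm]

theorem ssym_involutive (d : ℕ) (g g' : G d) : ssym g (ssym g g') = g' := by
  obtain ⟨a, v, t⟩ := g
  obtain ⟨a', v', t'⟩ := g'
  have hc : Real.cosh (a - (2 * a - a')) = Real.cosh (a - a') := by
    rw [show a - (2 * a - a') = -(a - a') by ring, Real.cosh_neg]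
  have hs : Real.sinh (a - (2 * a - a')) = -Real.sinh (a - a') := by
    rw [show a - (2 * a - a') = -(a - a') by ring, Real.sinh_neg]
  have hc2 : Real.cosh (2 * a - 2 * (2 * a - a')) = Real.cosh (2 * a - 2 * a') := by
    rw [show 2 * a - 2 * (2 * a - a') = -(2 * a - 2 * a') by ring, Real.cosh_neg]
  simp only [ssym, hc, hs, hc2, omega0_sub_right, omega0_smul_right, omega0_self]
  refine Prod.ext (by ring) (Prod.ext ?_ (by ring))
  simp only [sub_sub_cancel]
end
end

section
/- Each symmetry s_g preserves the symplectic form ω = 2 da ∧ dt + ω₀: i.e. s_g^* ω = ω, where ω₀ = Σ_{i=1}^d dn_i ∧ dm_i in coordinates v = (n,m). -/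
open Real
noncomputable section

/-- The constant symplectic form ω = 2 da∧dt + ω₀ evaluated on tangent vectors. -/
def omg {d : ℕ} (X Y : G d) : ℝ :=
  2 * (X.1 * Y.2.2 - Y.1 * X.2.2) + omega0 X.2.1 Y.2.1

/-! The differential of `s_g` at any point `g'` has the shape
`(a, v, t) ↦ (-a, -v - a w, -t + β a + ω₀(w, v) / 2)` for some `w ∈ ℝ^{2d}`, `β ∈ ℝ` depending on
`g, g'`. Every such map preserves `ω`: the cross terms `a ω₀(w, ·)` coming from `ω₀` cancel those
coming from `2 da ∧ dt`, and `β` only enters through `da ∧ da = 0`. -/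

section SymplecticForm

variable {d : ℕ}

lemma omega0_eq_dotProduct (v w : (Fin d → ℝ) × (Fin d → ℝ)) :
    omega0 v w = v.1 ⬝ᵥ w.2 - v.2 ⬝ᵥ w.1 := by
  simp only [omega0, dotProduct, Finset.sum_sub_distrib]

lemma omega0_smul_left (c : ℝ) (v w : (Fin d → ℝ) × (Fin d → ℝ)) :
    omega0 (c • v) w = c * omega0 v w := by
  simp only [omega0_eq_dotProduct, Prod.smul_fst, Prod.smul_snd, smul_dotProduct, smul_eq_mul]
  ring

def omega0Right (v : (Fin d → ℝ) × (Fin d → ℝ)) : ((Fin d → ℝ) × (Fin d → ℝ)) →L[ℝ] ℝ :=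
  LinearMap.toContinuousLinearMap
    { toFun := omega0 v
      map_add' := fun w w' => by
        simp only [omega0_eq_dotProduct, Prod.fst_add, Prod.snd_add, dotProduct_add]
        ring
      map_smul' := fun c w => by
        simp only [omega0_eq_dotProduct, Prod.smul_fst, Prod.smul_snd, dotProduct_smul,
          smul_eq_mul, RingHom.id_apply]
        ring }

lemma omega0Right_apply (v w : (Fin d → ℝ) × (Fin d → ℝ)) : omega0Right v w = omega0 v w := rfl

def negShear (w : (Fin d → ℝ) × (Fin d → ℝ)) (β : ℝ) (X : G d) : G d :=
  (-X.1, -X.2.1 - X.1 • w, -X.2.2 + β * X.1 + omega0 w X.2.1 / 2)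

lemma omg_negShear (w : (Fin d → ℝ) × (Fin d → ℝ)) (β : ℝ) (X Y : G d) :
    omg (negShear w β X) (negShear w β Y) = omg X Y := by
  simp only [omg, negShear, omega0_eq_dotProduct, Prod.fst_sub, Prod.snd_sub, Prod.fst_neg,
    Prod.snd_neg, Prod.smul_fst, Prod.smul_snd, dotProduct_sub, sub_dotProduct, dotProduct_neg,
    neg_dotProduct, dotProduct_smul, smul_dotProduct, smul_eq_mul]
  simp only [dotProduct_comm]
  ring

lemma fderiv_ssym_apply (g g' X : G d) :
    fderiv ℝ (fun h : G d => ssym g h) g' X =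
      negShear ((2 * sinh (g.1 - g'.1)) • g.2.1)
        (-(4 * g.2.2 * sinh (2 * g.1 - 2 * g'.1)) - omega0 g.2.1 g'.2.1 * cosh (g.1 - g'.1)) X := by
  have ha : HasFDerivAt (fun h : G d => h.1) (ContinuousLinearMap.fst ℝ _ _) g' := hasFDerivAt_fst
  have hv : HasFDerivAt (fun h : G d => h.2.1) _ g' := (hasFDerivAt_snd (𝕜 := ℝ) (p := g')).fst
  have ht : HasFDerivAt (fun h : G d => h.2.2) _ g' := (hasFDerivAt_snd (𝕜 := ℝ) (p := g')).snd
  have hdiff : HasFDerivAt (fun h : G d => g.1 - h.1) _ g' := ha.const_sub g.1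
  have hA := ha.const_sub (2 * g.1)
  have hV := ((hdiff.cosh.const_mul 2).smul_const g.2.1).sub hv
  have hT := ((((ha.const_mul 2).const_sub (2 * g.1)).cosh.const_mul (2 * g.2.2)).sub ht).add
    (((omega0Right g.2.1).hasFDerivAt.comp g' hv).mul hdiff.sinh)
  have hF : HasFDerivAt (fun h : G d => ssym g h) _ g' := hA.prodMk (hV.prodMk hT)
  rw [hF.fderiv]
  simp only [ContinuousLinearMap.prod_apply, ContinuousLinearMap.comp_apply,
    ContinuousLinearMap.coe_fst', ContinuousLinearMap.coe_snd', neg_apply, smul_apply,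
    ContinuousLinearMap.smulRight_apply, add_apply, sub_apply, smul_eq_mul, Function.comp_apply,
    omega0Right_apply, negShear, Prod.mk.injEq, true_and]
  refine ⟨by module, ?_⟩
  rw [omega0_smul_left]
  ring

end SymplecticForm

theorem ssym_symplectomorphism (d : ℕ) (g g' X Y : G d) :
    omg (fderiv ℝ (fun h : G d => ssym g h) g' X) (fderiv ℝ (fun h : G d => ssym g h) g' Y)
      = omg X Y := by
  rw [fderiv_ssym_apply, fderiv_ssym_apply, omg_negShear]
end
end
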